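/- Let g ∈ A *_C B be an element whose normal presentation g = z₁⋯z_j c (j ≥ 1) ends with a syllable z_j ∈ X (i.e. an A-syllable). Then for all b, b' ∈ B, ‖b⁻¹ g b'‖ ≥ d(b', C), where ‖·‖ is the word norm with respect to S_A ∪ S_B and d(b', C) = inf{d(b', c'') : c'' ∈ C}. -/

import Mathlib

/-- The word norm of `g` with respect to the generating set `S`. -/
noncomputable def wordNorm {G : Type*} [Group G] (S : Set G) (g : G) : ℕ :=
  sInf {k : ℕ | ∃ l : List G, l.length = k ∧ (∀ x ∈ l, x ∈ S) ∧ l.prod = g}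

/-- The word metric on `G` associated with the generating set `S`. -/
noncomputable def wordDist {G : Type*} [Group G] (S : Set G) (g h : G) : ℝ :=
  (wordNorm S (g⁻¹ * h) : ℝ)

/-- `G` is the amalgamated free product `A *_C B` of its subgroups `A` and `B`
over the common subgroup `C`: `A` and `B` generate `G`, and any pair of
homomorphisms on `A` and `B` agreeing on `C` extends to `G` (this universal
property, together with the generation condition, characterizes `A *_C B`). -/
def IsAmalgamatedProduct (G : Type*) [Group G] (A B C : Subgroup G) : Prop :=
  C ≤ A ∧ C ≤ B ∧ Subgroup.closure ((A : Set G) ∪ (B : Set G)) = ⊤ ∧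
  ∀ {H : Type*} [Group H] (fA : A →* H) (fB : B →* H),
    (∀ (x : G) (hxA : x ∈ A) (hxB : x ∈ B), x ∈ C → fA ⟨x, hxA⟩ = fB ⟨x, hxB⟩) →
    ∃ f : G →* H, (∀ a : A, f ↑a = fA a) ∧ (∀ b : B, f ↑b = fB b)

/-!
Let `W` be the set of elements whose normal form ends with an `A`-syllable. Left multiplication
by `B` preserves `W`, and left multiplication by an element of `A` maps `W` into `W ∪ C`. Now
`b⁻¹ g ∈ W`, whereas `b'⁻¹ ∉ W` by the normal form theorem (obtained by comparing `G` with Mathlib's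
`Monoid.PushoutI`). Reading a shortest word for `b⁻¹ g b'` from the right, the partial products
`s b'⁻¹` (`s` a suffix) start outside `W` and end in `W`, so they can only enter `W` from `C`:
some suffix has `s b'⁻¹ ∈ C`, whence `d(b', C) ≤ |s| ≤ ‖b⁻¹ g b'‖`.
-/

open Monoid Monoid.PushoutI

theorem Subgroup.countable_closure {G : Type*} [Group G] {S : Set G} (hS : S.Countable) :
    Countable (Subgroup.closure S) := by
  have := hS.to_subtype
  rw [← Subtype.range_coe (s := S), ← FreeGroup.range_lift_eq_closure]
  exact Function.Surjective.countable (MonoidHom.rangeRestrict_surjective _)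

instance Monoid.PushoutI.instCountable {ι : Type*} {G : ι → Type*} {H : Type*}
    [∀ i, Group (G i)] [Group H] {φ : ∀ i, H →* G i} [Countable ι] [∀ i, Countable (G i)]
    [Countable H] : Countable (PushoutI φ) := by
  let f : FreeGroup ((Σ i, G i) ⊕ H) →* PushoutI φ :=
    FreeGroup.lift (Sum.elim (fun p => of p.1 p.2) (base φ))
  refine Function.Surjective.countable (f := f) fun x => ?_
  induction x using PushoutI.induction_on with
  | of i g => exact ⟨.of (.inl ⟨i, g⟩), by simp [f]⟩
  | base h => exact ⟨.of (.inr h), by simp [f]⟩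
  | mul x y hx hy =>
    obtain ⟨u, rfl⟩ := hx
    obtain ⟨v, rfl⟩ := hy
    exact ⟨u * v, map_mul f u v⟩

theorem List.exists_suffix_prod_mul {M : Type*} [Monoid M] {P Q : M → Prop} {y : M} :
    ∀ {l : List M}, (∀ s ∈ l, ∀ x, P (s * x) → P x ∨ Q x) → ¬ P y → P (l.prod * y) →
      ∃ l', l' <:+ l ∧ Q (l'.prod * y)
  | [], _, hy, hl => absurd (by simpa using hl) hy
  | s :: l, hstep, hy, hl => by
    rw [List.prod_cons, mul_assoc] at hl
    rcases hstep s List.mem_cons_self _ hl with hP | hQ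
    · obtain ⟨l', hl', hQ⟩ := List.exists_suffix_prod_mul
        (fun s hs => hstep s (List.mem_cons_of_mem _ hs)) hy hP
      exact ⟨l', hl'.trans (List.suffix_cons s l), hQ⟩
    · exact ⟨l, List.suffix_cons s l, hQ⟩

section WordNorm

variable {G : Type*} [Group G] {S : Set G}

theorem wordNorm_prod_le {l : List G} (hl : ∀ x ∈ l, x ∈ S) : wordNorm S l.prod ≤ l.length :=
  Nat.sInf_le ⟨l, rfl, hl, rfl⟩

theorem wordNorm_prod_inv_le (hS : ∀ s ∈ S, s⁻¹ ∈ S) {l : List G} (hl : ∀ x ∈ l, x ∈ S) :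
    wordNorm S l.prod⁻¹ ≤ l.length := by
  have hl' : ∀ x ∈ (l.map (·⁻¹)).reverse, x ∈ S := by
    simp only [List.mem_reverse, List.mem_map]
    rintro _ ⟨x, hx, rfl⟩
    exact hS x (hl x hx)
  simpa [List.prod_inv_reverse] using wordNorm_prod_le hl'

theorem exists_length_eq_wordNorm (hS : ∀ s ∈ S, s⁻¹ ∈ S) (hgen : Subgroup.closure S = ⊤)
    (g : G) : ∃ l : List G, l.length = wordNorm S g ∧ (∀ x ∈ l, x ∈ S) ∧ l.prod = g := by
  have hg : g ∈ Submonoid.closure (S ∪ S⁻¹) := by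
    rw [← Subgroup.closure_toSubmonoid, hgen]
    trivial
  obtain ⟨l, hlS, rfl⟩ := Submonoid.exists_list_of_mem_closure hg
  have hl : ∀ x ∈ l, x ∈ S := fun x hx => (hlS x hx).elim id fun h => by simpa using hS _ h
  exact Nat.sInf_mem (s := {k | ∃ l' : List G, l'.length = k ∧ (∀ x ∈ l', x ∈ S) ∧
    l'.prod = l.prod}) ⟨_, l, rfl, hl, rfl⟩

end WordNorm

namespace AmalgamatedProduct

variable {G : Type*} [Group G] {A B C : Subgroup G}

variable (A B) in
def factor : Bool → Subgroup G
  | true => A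
  | false => B

variable (A B C) in
/-- `x = x₁ ⋯ xₙ` with `n ≥ 1` and the `xₖ` taken alternately from `A ∖ C` and `B ∖ C`;
`i` and `e` say whether `x₁` and `xₙ` lie in `A` (`true`) or in `B` (`false`). -/
inductive IsAlternating : Bool → Bool → G → Prop
  | single {i : Bool} {x : G} : x ∈ factor A B i → x ∉ C → IsAlternating i i x
  | cons {i e : Bool} {x y : G} : x ∈ factor A B i → x ∉ C → IsAlternating (!i) e y →
      IsAlternating i e (x * y)

theorem le_factor (hCA : C ≤ A) (hCB : C ≤ B) : ∀ i, C ≤ factor A B i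
  | true => hCA
  | false => hCB

def diagram (hCA : C ≤ A) (hCB : C ≤ B) : ∀ i, C →* factor A B i :=
  fun i => Subgroup.inclusion (le_factor hCA hCB i)

namespace IsAlternating

variable {i e : Bool} {x : G}

theorem mul_right_of_mem_C (hCA : C ≤ A) (hCB : C ≤ B) (hx : IsAlternating A B C i e x)
    {c : G} (hc : c ∈ C) : IsAlternating A B C i e (x * c) := by
  induction hx with
  | single hxi hxC =>
    exact .single (mul_mem hxi (le_factor hCA hCB _ hc))
      fun h => hxC (by simpa using mul_mem h (inv_mem hc))
  | cons hxi hxC _ ih =>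
    rw [mul_assoc]
    exact .cons hxi hxC ih

theorem mul_left_of_mem_C (hCA : C ≤ A) (hCB : C ≤ B) (hx : IsAlternating A B C i e x)
    {c : G} (hc : c ∈ C) : IsAlternating A B C i e (c * x) := by
  have hmul {y : G} (hy : y ∈ factor A B i) (hyC : y ∉ C) : c * y ∈ factor A B i ∧ c * y ∉ C :=
    ⟨mul_mem (le_factor hCA hCB i hc) hy, fun h => hyC (by simpa using mul_mem (inv_mem hc) h)⟩
  cases hx with
  | single hxi hxC => exact .single (hmul hxi hxC).1 (hmul hxi hxC).2
  | cons hxi hxC hy =>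
    rw [← mul_assoc]
    exact .cons (hmul hxi hxC).1 (hmul hxi hxC).2 hy

theorem mul_left_of_mem_factor (hCA : C ≤ A) (hCB : C ≤ B) (hx : IsAlternating A B C i e x)
    {a : G} (ha : a ∈ factor A B i) :
    IsAlternating A B C i e (a * x) ∨ IsAlternating A B C (!i) e (a * x) ∨ a * x ∈ C := by
  cases hx with
  | single hxi hxC =>
    by_cases h : a * x ∈ C
    · exact .inr (.inr h)
    · exact .inl (.single (mul_mem ha hxi) h)
  | @cons _ _ x y hxi hxC hy =>
    rw [← mul_assoc]
    by_cases h : a * x ∈ C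
    · exact .inr (.inl (hy.mul_left_of_mem_C hCA hCB h))
    · exact .inl (.cons (mul_mem ha hxi) h hy)

theorem exists_reduced_word (hCA : C ≤ A) (hCB : C ≤ B) {f : G →* PushoutI (diagram hCA hCB)}
    (hf : ∀ i (y : factor A B i), f y = of i y) (hx : IsAlternating A B C i e x) :
    ∃ w : CoprodI.Word (fun i => factor A B i), Reduced (diagram hCA hCB) w ∧
      w.fstIdx = some i ∧ ofCoprodI w.prod = f x := by
  have step {i : Bool} {y : G} (hy : y ∈ factor A B i) (hyC : y ∉ C)
      (w : CoprodI.Word (fun i => factor A B i)) (hw : Reduced (diagram hCA hCB) w)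
      (hwi : w.fstIdx ≠ some i) :
      ∃ w' : CoprodI.Word (fun i => factor A B i), Reduced (diagram hCA hCB) w' ∧
        w'.fstIdx = some i ∧ ofCoprodI w'.prod = f y * ofCoprodI w.prod := by
    have hy1 : (⟨y, hy⟩ : factor A B i) ≠ 1 := fun h =>
      hyC (by rw [show y = 1 from congrArg Subtype.val h]; exact C.one_mem)
    refine ⟨.cons ⟨y, hy⟩ w hwi hy1, ?_, by simp, by simpa using (hf i ⟨y, hy⟩).symm⟩
    rintro g (hg | hg)
    · rintro ⟨c, hc⟩
      obtain rfl : (c : G) = y := congrArg Subtype.val hc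
      exact hyC c.2
    · exact hw g ‹_›
  induction hx with
  | single hxi hxC =>
    simpa using step hxi hxC .empty (by simp [Reduced]) (by simp [CoprodI.Word.fstIdx])
  | cons hxi hxC _ ih =>
    obtain ⟨w, hw, hwi, hwx⟩ := ih
    obtain ⟨w', hw', hw'i, hw'x⟩ := step hxi hxC w hw (by simp [hwi])
    exact ⟨w', hw', hw'i, by rw [hw'x, hwx, map_mul]⟩

end IsAlternating

theorem isAlternating_prod_ofFn {n : ℕ} {z : Fin (n + 1) → G} {side : Fin (n + 1) → Bool}
    (hz : ∀ k, z k ∈ factor A B (side k)) (hzC : ∀ k, z k ∉ C)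
    (halt : ∀ k : Fin n, side k.succ ≠ side k.castSucc) :
    IsAlternating A B C (side 0) (side (Fin.last n)) (List.ofFn z).prod := by
  induction n with
  | zero => simpa using IsAlternating.single (hz 0) (hzC 0)
  | succ n ih =>
    rw [List.ofFn_succ, List.prod_cons]
    refine .cons (hz 0) (hzC 0) ?_
    have h := ih (z := fun k => z k.succ) (side := fun k => side k.succ) (fun k => hz k.succ)
      (fun k => hzC k.succ) fun k => by simpa only [Fin.succ_castSucc] using halt k.succ
    rwa [Bool.eq_not_iff.mpr (halt 0), Fin.castSucc_zero, Fin.succ_last] at h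

variable (A B C) in
/-- In normal form, `y` ends with a syllable from `A ∖ C`. -/
def EndsInA (y : G) : Prop := ∃ b ∈ B, IsAlternating A B C true true (b * y)

variable {i : Bool} {x y a b : G}

theorem IsAlternating.endsInA (hx : IsAlternating A B C i true x) : EndsInA A B C x := by
  cases i
  · cases hx with
    | cons hxB _ hy => exact ⟨_, inv_mem hxB, by simpa using hy⟩
  · exact ⟨1, one_mem _, by simpa using hx⟩

theorem EndsInA.mul_left_of_mem_B (hy : EndsInA A B C y) (hb : b ∈ B) :
    EndsInA A B C (b * y) := by
  obtain ⟨b', hb', h⟩ := hy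
  exact ⟨b' * b⁻¹, mul_mem hb' (inv_mem hb), by simpa [mul_assoc] using h⟩

theorem EndsInA.mul_left_of_mem_A (hCA : C ≤ A) (hCB : C ≤ B) (hy : EndsInA A B C y)
    (ha : a ∈ A) : EndsInA A B C (a * y) ∨ a * y ∈ C := by
  by_cases haC : a ∈ C
  · exact .inl (hy.mul_left_of_mem_B (hCB haC))
  obtain ⟨b, hb, hby⟩ := hy
  by_cases hbC : b ∈ C
  · have h := hby.mul_left_of_mem_factor hCA hCB (a := a * b⁻¹) (mul_mem ha (inv_mem (hCA hbC)))
    rw [show a * b⁻¹ * (b * y) = a * y by group] at h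
    rcases h with h | h | h
    exacts [.inl h.endsInA, .inl h.endsInA, .inr h]
  · have hy : IsAlternating A B C false true y := by
      simpa using IsAlternating.cons (i := false) (inv_mem hb) (by simpa using hbC) hby
    exact .inl (IsAlternating.cons (i := true) ha haC hy).endsInA

end AmalgamatedProduct

namespace IsAmalgamatedProduct

open AmalgamatedProduct

universe u v

variable {G : Type u} [Group G] {A B C : Subgroup G}

/-- Countability lets the pushout be shrunk into the universe `v` in which the universal property
of `G` is available. -/
theorem exists_hom_pushoutI (hG : IsAmalgamatedProduct.{u, v} G A B C) [Countable A]
    [Countable B] :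
    ∃ f : G →* PushoutI (diagram hG.1 hG.2.1), ∀ i (y : factor A B i), f y = of i y := by
  obtain ⟨hCA, hCB, -, hlift⟩ := hG
  have : Countable C := Function.Injective.countable (Subgroup.inclusion_injective hCA)
  have : ∀ i, Countable (factor A B i) := fun i => by cases i <;> assumption
  let e := Shrink.mulEquiv.{v} (α := PushoutI (diagram hCA hCB))
  obtain ⟨f, hfA, hfB⟩ := hlift (e.symm.toMonoidHom.comp (of (φ := diagram hCA hCB) true))
    (e.symm.toMonoidHom.comp (of (φ := diagram hCA hCB) false)) fun y _ _ hyC =>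
      congrArg e.symm ((of_apply_eq_base (diagram hCA hCB) true ⟨y, hyC⟩).trans
        (of_apply_eq_base (diagram hCA hCB) false ⟨y, hyC⟩).symm)
  refine ⟨e.toMonoidHom.comp f, fun i y => ?_⟩
  cases i
  exacts [(congrArg e (hfB y)).trans (e.apply_symm_apply _),
    (congrArg e (hfA y)).trans (e.apply_symm_apply _)]

theorem not_mem_of_isAlternating (hG : IsAmalgamatedProduct G A B C) [Countable A]
    [Countable B] {i e : Bool} {x : G} (hx : IsAlternating A B C i e x) : x ∉ C := by
  intro hxC
  obtain ⟨f, hf⟩ := hG.exists_hom_pushoutI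
  obtain ⟨w, hw, hwi, hwx⟩ := hx.exists_reduced_word hG.1 hG.2.1 hf
  have hbase : ofCoprodI w.prod ∈ (base (diagram hG.1 hG.2.1)).range :=
    ⟨⟨x, hxC⟩, by rw [hwx, ← of_apply_eq_base _ true]; exact (hf true ⟨x, hG.1 hxC⟩).symm⟩
  rw [hw.eq_empty_of_mem_range (fun i => Subgroup.inclusion_injective _) hbase] at hwi
  simp [CoprodI.Word.fstIdx] at hwi

theorem not_endsInA_of_mem_B (hG : IsAmalgamatedProduct G A B C) [Countable A] [Countable B]
    {b : G} (hb : b ∈ B) : ¬ EndsInA A B C b := by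
  rintro ⟨b', hb', hx⟩
  by_cases hxC : b' * b ∈ C
  · exact hG.not_mem_of_isAlternating hx hxC
  · have hx' := IsAlternating.cons (i := false) (inv_mem (mul_mem hb' hb))
      (fun h => hxC (by simpa using inv_mem h)) hx
    exact hG.not_mem_of_isAlternating hx' (by rw [inv_mul_cancel]; exact one_mem C)

theorem exists_wordNorm_inv_mul_le (hG : IsAmalgamatedProduct G A B C) [Countable A]
    [Countable B] {S : Set G} (hS : ∀ s ∈ S, s⁻¹ ∈ S) (hgen : Subgroup.closure S = ⊤)
    (hSAB : S ⊆ A ∪ B) {x b : G} (hx : EndsInA A B C x) (hb : b ∈ B) :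
    ∃ c ∈ C, wordNorm S (b⁻¹ * c) ≤ wordNorm S (x * b) := by
  obtain ⟨l, hlen, hlS, hl⟩ := exists_length_eq_wordNorm hS hgen (x * b)
  have hstep : ∀ s ∈ l, ∀ y, EndsInA A B C (s * y) → EndsInA A B C y ∨ y ∈ C := by
    intro s hs y hy
    rcases hSAB (hlS s hs) with hsA | hsB
    · simpa using hy.mul_left_of_mem_A hG.1 hG.2.1 (inv_mem hsA)
    · exact .inl (by simpa using hy.mul_left_of_mem_B (inv_mem hsB))
  obtain ⟨l', hl', hC⟩ := List.exists_suffix_prod_mul (Q := (· ∈ C)) hstep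
    (hG.not_endsInA_of_mem_B (inv_mem hb)) (by rwa [hl, mul_inv_cancel_right])
  refine ⟨(l'.prod * b⁻¹)⁻¹, inv_mem hC, ?_⟩
  calc wordNorm S (b⁻¹ * (l'.prod * b⁻¹)⁻¹) = wordNorm S l'.prod⁻¹ := by group
    _ ≤ l'.length := wordNorm_prod_inv_le hS fun s hs => hlS s (hl'.subset hs)
    _ ≤ l.length := hl'.length_le
    _ = wordNorm S (x * b) := hlen

end IsAmalgamatedProduct

open AmalgamatedProduct

/-- Let `g ∈ A *_C B` be an element whose normal presentation
`g = z₁ ⋯ z_j c` (`j ≥ 1`, `c ∈ C`, syllables alternating between `A ∖ C`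
and `B ∖ C`, with `side i = true` marking an `A`-syllable) ends with an
`A`-syllable `z_j`.  Then for all `b, b' ∈ B`,
`‖b⁻¹ g b'‖ ≥ d(b', C)`, where `‖·‖` is the word norm with respect to
`S_A ∪ S_B` and `d(b', C) = inf {d(b', c'') : c'' ∈ C}`. -/
theorem wordNorm_conj_ge_dist {G : Type*} [Group G] (A B C : Subgroup G)
    (hG : IsAmalgamatedProduct G A B C)
    (SA SB : Set G) (hSAfin : SA.Finite) (hSBfin : SB.Finite)
    (hSAsymm : ∀ s ∈ SA, s⁻¹ ∈ SA) (hSBsymm : ∀ s ∈ SB, s⁻¹ ∈ SB)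
    (hSAgen : Subgroup.closure SA = A) (hSBgen : Subgroup.closure SB = B)
    (j : ℕ) (hj : 1 ≤ j) (z : Fin j → G) (side : Fin j → Bool)
    (hA : ∀ i, side i = true → z i ∈ A) (hB : ∀ i, side i = false → z i ∈ B)
    (hnotC : ∀ i, z i ∉ C)
    (halt : ∀ i i' : Fin j, (i' : ℕ) = (i : ℕ) + 1 → side i' ≠ side i)
    (hlast : side ⟨j - 1, by omega⟩ = true)
    (c : G) (hc : c ∈ C) (g : G) (hg : g = (List.ofFn z).prod * c) :
    ∀ b ∈ B, ∀ b' ∈ B,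
      sInf ((fun c'' => wordNorm (SA ∪ SB) (b'⁻¹ * c'')) '' (C : Set G)) ≤
        wordNorm (SA ∪ SB) (b⁻¹ * g * b') := by
  intro b hb b' hb'
  have : Countable A := hSAgen ▸ Subgroup.countable_closure hSAfin.countable
  have : Countable B := hSBgen ▸ Subgroup.countable_closure hSBfin.countable
  have hS : ∀ s ∈ SA ∪ SB, s⁻¹ ∈ SA ∪ SB := fun s hs => hs.imp (hSAsymm s) (hSBsymm s)
  have hgen : Subgroup.closure (SA ∪ SB) = ⊤ := by
    rw [Subgroup.closure_union, hSAgen, hSBgen, ← hG.2.2.1, Subgroup.closure_union,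
      Subgroup.closure_eq, Subgroup.closure_eq]
  have hSAB : SA ∪ SB ⊆ A ∪ B := Set.union_subset_union
    (hSAgen ▸ Subgroup.subset_closure) (hSBgen ▸ Subgroup.subset_closure)
  obtain ⟨n, rfl⟩ : ∃ n, j = n + 1 := ⟨j - 1, by omega⟩
  have hz : ∀ k, z k ∈ factor A B (side k) := fun k => by
    cases h : side k
    exacts [hB k h, hA k h]
  have hg' : IsAlternating A B C (side 0) true g := by
    rw [hg, ← hlast]
    exact (isAlternating_prod_ofFn hz hnotC fun k => halt _ _ rfl).mul_right_of_mem_C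
      hG.1 hG.2.1 hc
  obtain ⟨c'', hc'', hle⟩ := hG.exists_wordNorm_inv_mul_le hS hgen hSAB
    (hg'.endsInA.mul_left_of_mem_B (inv_mem hb)) hb'
  exact le_trans (Nat.sInf_le ⟨c'', hc'', rfl⟩) hle
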